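/- Let G = (V,E) be a finite simple graph with a 1-critical bifiltration given by crit : E → ℝ², let e = {a,b} be an edge of G, and let v be an edge neighbor of e in G (so {a,v}, {b,v} ∈ E). Then the set of grades r ∈ ℝ² such that crit(e) ≤ r and e is NOT dominated by v in G_r equals Δ(crit(e), crit({a,v}) ∗ crit({b,v})) ∪ ⋃_w R_w, where the union runs over all edge neighbors w of e in G with w ≠ v, and R_w := Δ(crit_e(w), crit({v,w})) if {v,w} ∈ E, while R_w := {r ∈ ℝ² : crit_e(w) ≤ r} if {v,w} ∉ E. -/

import Mathlib

/-- The subgraph of `G` at grade `c` in a 1-critical bifiltration: it keeps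
exactly the edges whose critical grade is `≤ c` (componentwise order on `ℝ²`). -/
def gradedSubgraph {V : Type*} (G : SimpleGraph V) (crit : Sym2 V → ℝ × ℝ)
    (c : ℝ × ℝ) : SimpleGraph V where
  Adj u v := G.Adj u v ∧ crit s(u, v) ≤ c
  symm := by
    refine ⟨fun u v h => ?_⟩
    refine ⟨h.1.symm, ?_⟩
    rw [Sym2.eq_swap]
    exact h.2
  loopless := ⟨fun u h => G.loopless.irrefl u h.1⟩

/-- `w` is an edge neighbor of the edge `{a,b}` in `H`: it is adjacent to both endpoints. -/
def edgeNbr {V : Type*} (H : SimpleGraph V) (a b w : V) : Prop :=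
  H.Adj a w ∧ H.Adj b w

/-- The edge `{a,b}` is dominated by `v` in `H`. -/
def dominatedBy {V : Type*} (H : SimpleGraph V) (a b v : V) : Prop :=
  edgeNbr H a b v ∧ ∀ w, edgeNbr H a b w → w ≠ v → H.Adj v w

/-- The edge `{a,b}` is dominated in `H` (by some vertex). -/
def dominated {V : Type*} (H : SimpleGraph V) (a b : V) : Prop :=
  ∃ v, dominatedBy H a b v

/-- `crit_e(w) = crit(e) ∗ crit({a,w}) ∗ crit({b,w})`, the grade at which `w`
becomes an edge neighbor of `e = {a,b}`. -/
def critE {V : Type*} (crit : Sym2 V → ℝ × ℝ) (a b w : V) : ℝ × ℝ :=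
  crit s(a, b) ⊔ crit s(a, w) ⊔ crit s(b, w)

/-- The set `C = {crit(e)} ∪ {crit_e(w₁) ∗ crit_e(w₂) : w₁, w₂ ∈ N_G(e)}`. -/
def critJoins {V : Type*} (G : SimpleGraph V) (crit : Sym2 V → ℝ × ℝ)
    (a b : V) : Set (ℝ × ℝ) :=
  {crit s(a, b)} ∪
    {x | ∃ w₁ w₂, edgeNbr G a b w₁ ∧ edgeNbr G a b w₂ ∧
      x = critE crit a b w₁ ⊔ critE crit a b w₂}

/-- `Δ(p,q) = {r : p ≤ r ∧ ¬ q ≤ r}`. -/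
def Delta (p q : ℝ × ℝ) : Set (ℝ × ℝ) := {r | p ≤ r ∧ ¬ q ≤ r}

/-!
Domination of `e = {a,b}` by `v` at grade `r` can fail in only two ways: `v` is not yet an edge
neighbor of `e` in `G_r`, i.e. `crit({a,v}) ∗ crit({b,v}) ≰ r`; or some other edge neighbor `w`
of `e` in `G_r` (present exactly when `crit_e(w) ≤ r`) is not adjacent to `v` in `G_r`, which
means `{v,w} ∉ E` or `crit({v,w}) ≰ r`.
-/

theorem not_dominatedBy_iff {V : Type*} {H : SimpleGraph V} {a b v : V} :
    ¬ dominatedBy H a b v ↔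
      ¬ edgeNbr H a b v ∨ ∃ w, edgeNbr H a b w ∧ w ≠ v ∧ ¬ H.Adj v w := by
  simp only [dominatedBy, not_and_or, not_forall, exists_prop]

section Bifiltration

variable {V : Type*} {G : SimpleGraph V} {crit : Sym2 V → ℝ × ℝ} {a b v w : V} {r : ℝ × ℝ}

theorem gradedSubgraph_adj : (gradedSubgraph G crit r).Adj v w ↔ G.Adj v w ∧ crit s(v, w) ≤ r :=
  Iff.rfl

theorem edgeNbr_gradedSubgraph_iff :
    edgeNbr (gradedSubgraph G crit r) a b w ↔
      edgeNbr G a b w ∧ crit s(a, w) ⊔ crit s(b, w) ≤ r := by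
  simp only [edgeNbr, gradedSubgraph_adj, sup_le_iff]
  tauto

theorem critE_le_iff :
    critE crit a b w ≤ r ↔ crit s(a, b) ≤ r ∧ crit s(a, w) ⊔ crit s(b, w) ≤ r := by
  simp only [critE, sup_le_iff, and_assoc]

theorem mem_ite_Delta_iff [Decidable (G.Adj v w)] :
    r ∈ (if G.Adj v w then Delta (critE crit a b w) (crit s(v, w))
      else {r | critE crit a b w ≤ r}) ↔
      critE crit a b w ≤ r ∧ ¬ (gradedSubgraph G crit r).Adj v w := by
  split_ifs with h <;> simp [Delta, gradedSubgraph_adj, h]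

end Bifiltration

open scoped Classical in
theorem region_of_non_domination_general
    {V : Type*} (G : SimpleGraph V) (crit : Sym2 V → ℝ × ℝ)
    (a b v : V) (hv : edgeNbr G a b v) :
    {r : ℝ × ℝ | crit s(a, b) ≤ r ∧ ¬ dominatedBy (gradedSubgraph G crit r) a b v} =
      Delta (crit s(a, b)) (crit s(a, v) ⊔ crit s(b, v)) ∪
        ⋃ w ∈ {w | edgeNbr G a b w ∧ w ≠ v},
          (if G.Adj v w then Delta (critE crit a b w) (crit s(v, w))
            else {r : ℝ × ℝ | critE crit a b w ≤ r}) := by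
  ext r
  simp only [Set.mem_union, Set.mem_iUnion, Set.mem_ofPred_eq, exists_prop, mem_ite_Delta_iff]
  simp only [Delta, Set.mem_ofPred_eq, not_dominatedBy_iff, edgeNbr_gradedSubgraph_iff, critE_le_iff,
    hv, true_and]
  constructor
  · rintro ⟨hr, hvr | ⟨w, ⟨hw, hwr⟩, hwv, hvw⟩⟩
    · exact Or.inl ⟨hr, hvr⟩
    · exact Or.inr ⟨w, ⟨hw, hwv⟩, ⟨hr, hwr⟩, hvw⟩
  · rintro (⟨hr, hvr⟩ | ⟨w, ⟨hw, hwv⟩, ⟨hr, hwr⟩, hvw⟩)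
    · exact ⟨hr, Or.inl hvr⟩
    · exact ⟨hr, Or.inr ⟨w, ⟨hw, hwr⟩, hwv, hvw⟩⟩

open scoped Classical in
/-- region of non-domination. The set of grades at which
`e = {a,b}` is present but not dominated by `v` is the union of the
`Δ`-regions. -/
theorem region_of_non_domination
    {V : Type*} [Fintype V] (G : SimpleGraph V) (crit : Sym2 V → ℝ × ℝ)
    (a b v : V) (hab : G.Adj a b) (hv : edgeNbr G a b v) :
    {r : ℝ × ℝ | crit s(a, b) ≤ r ∧ ¬ dominatedBy (gradedSubgraph G crit r) a b v} =
      Delta (crit s(a, b)) (crit s(a, v) ⊔ crit s(b, v)) ∪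
        ⋃ w ∈ {w | edgeNbr G a b w ∧ w ≠ v},
          (if G.Adj v w then Delta (critE crit a b w) (crit s(v, w))
            else {r : ℝ × ℝ | critE crit a b w ≤ r}) :=
  region_of_non_domination_general G crit a b v hv
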